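/- For every β > 0, the function R(d) = ((d²+2)e^{βd} − 2)² / (d²(e^{2βd} − 1)) on (0,∞) has a unique global minimum point d_opt > 0, and d_opt is the unique positive solution of the equation (d²−2)e^{3βd} + 2(βd+1)e^{2βd} − (βd³ + d² + 2βd − 2)e^{βd} − 2 = 0. -/

import Mathlib

open Real Filter

/-- The K-optimality objective for the two-point design `{0, d}`:
`R(d) = ((d²+2)e^{βd} − 2)² / (d²(e^{2βd} − 1))`. -/
noncomputable def Rtwo (β d : ℝ) : ℝ :=
  ((d ^ 2 + 2) * exp (β * d) - 2) ^ 2 / (d ^ 2 * (exp (2 * β * d) - 1))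

/-! With `N = (d²+2)e^{βd} - 2` and `D = d²(e^{2βd} - 1)` one has `R' = 2dN·G/D²`, where `G` is the
left-hand side of the stationarity equation, so `R'` has the sign of `G`. The key fact is that
`G / (d²e^{3βd})` is strictly increasing on `(0, ∞)`: with `x = βd` the numerator of its derivative is
`e^{3x} d (W(x) + (2x² + x) d² e^x)`, and `W > 0` because `W` and its successive derivatives (up to
factors `e^x`) vanish at `0` until one is visibly positive. Writing
`G = e^x (e^{2x} - x - 1) d² + H(x)` with `-4e^{3x} ≤ H(x) < -2x²` shows that `G < 0` for small `d`
and `G > 0` for large `d`, so `G` has exactly one positive zero, where `R` turns from decreasing to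
increasing. -/

lemma hasDerivAt_of_eq {f g : ℝ → ℝ} {f' g' x : ℝ} (h : HasDerivAt f f' x)
    (hfg : ∀ y, g y = f y) (hfg' : g' = f') : HasDerivAt g g' x := by
  rwa [funext hfg, hfg']

section Monotonicity

variable {f f' : ℝ → ℝ} {a b : ℝ}

lemma strictMonoOn_Ici_of_hasDerivAt_pos (hf : ∀ x ≥ a, HasDerivAt f (f' x) x)
    (hf' : ∀ x > a, 0 < f' x) : StrictMonoOn f (Set.Ici a) :=
  strictMonoOn_of_hasDerivWithinAt_pos (convex_Ici a)
    (fun x hx => (hf x hx).continuousAt.continuousWithinAt)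
    (fun x hx => by
      rw [interior_Ici] at hx ⊢
      exact (hf x (le_of_lt hx)).hasDerivWithinAt)
    (fun x hx => hf' x (by rwa [interior_Ici] at hx))

lemma strictMonoOn_Ioi_of_hasDerivAt_pos (hf : ∀ x > a, HasDerivAt f (f' x) x)
    (hf' : ∀ x > a, 0 < f' x) : StrictMonoOn f (Set.Ioi a) :=
  strictMonoOn_of_hasDerivWithinAt_pos (convex_Ioi a)
    (fun x hx => (hf x hx).continuousAt.continuousWithinAt)
    (fun x hx => by
      rw [interior_Ioi] at hx ⊢
      exact (hf x hx).hasDerivWithinAt)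
    (fun x hx => hf' x (by rwa [interior_Ioi] at hx))

lemma strictAntiOn_Ioc_of_hasDerivAt_neg (hf : ∀ x > b, HasDerivAt f (f' x) x)
    (hf' : ∀ x ∈ Set.Ioo b a, f' x < 0) : StrictAntiOn f (Set.Ioc b a) :=
  strictAntiOn_of_hasDerivWithinAt_neg (convex_Ioc b a)
    (fun x hx => (hf x hx.1).continuousAt.continuousWithinAt)
    (fun x hx => by
      rw [interior_Ioc] at hx ⊢
      exact (hf x hx.1).hasDerivWithinAt)
    (fun x hx => hf' x (by rwa [interior_Ioc] at hx))

lemma lt_of_hasDerivAt_pos (hf : ∀ x, HasDerivAt f (f' x) x) (hf' : ∀ x > a, 0 < f' x)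
    {x : ℝ} (hx : a < x) : f a < f x :=
  strictMonoOn_Ici_of_hasDerivAt_pos (fun y _ => hf y) hf' Set.self_mem_Ici hx.le hx

lemma lt_of_hasDerivAt_neg_of_pos (hab : b < a) (hf : ∀ x > b, HasDerivAt f (f' x) x)
    (hneg : ∀ x ∈ Set.Ioo b a, f' x < 0) (hpos : ∀ x > a, 0 < f' x)
    {x : ℝ} (hx : b < x) (hxa : x ≠ a) : f a < f x := by
  rcases hxa.lt_or_gt with hlt | hgt
  · exact strictAntiOn_Ioc_of_hasDerivAt_neg hf hneg ⟨hx, hlt.le⟩ ⟨hab, le_rfl⟩ hlt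
  · exact strictMonoOn_Ici_of_hasDerivAt_pos (fun y hy => hf y (hab.trans_le hy)) hpos
      Set.self_mem_Ici hgt.le hgt

end Monotonicity

namespace KOptimal

lemma exp_two_mul_eq_sq (x : ℝ) : exp (2 * x) = exp x ^ 2 := by
  rw [← exp_nat_mul]; norm_num

lemma exp_three_mul_eq_cube (x : ℝ) : exp (3 * x) = exp x ^ 3 := by
  rw [← exp_nat_mul]; norm_num

lemma hasDerivAt_cubic_mul_exp (a b c e k x : ℝ) :
    HasDerivAt (fun y => (a * y ^ 3 + b * y ^ 2 + c * y + e) * exp (k * y))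
      ((3 * a * x ^ 2 + 2 * b * x + c + k * (a * x ^ 3 + b * x ^ 2 + c * x + e)) * exp (k * x)) x := by
  have hp := ((((hasDerivAt_pow 3 x).const_mul a).add ((hasDerivAt_pow 2 x).const_mul b)).add
    ((hasDerivAt_id' x).const_mul c)).add_const e
  have he := ((hasDerivAt_id' x).const_mul k).exp
  refine hasDerivAt_of_eq (hp.mul he) (fun y => rfl) ?_
  simp only [Pi.add_apply]; push_cast; ring

noncomputable def d2V (x : ℝ) : ℝ := 144 * exp (2 * x) - (8 * x ^ 2 + 64 * x + 116) * exp x + 8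
noncomputable def dV (x : ℝ) : ℝ := 72 * exp (2 * x) - (8 * x ^ 2 + 48 * x + 68) * exp x + (8 * x + 14)
noncomputable def V (x : ℝ) : ℝ :=
  36 * exp (2 * x) - (8 * x ^ 2 + 32 * x + 36) * exp x + (4 * x ^ 2 + 14 * x)
noncomputable def dW (x : ℝ) : ℝ :=
  12 * exp (3 * x) - (4 * x ^ 2 + 12 * x + 12) * exp (2 * x) + (4 * x ^ 2 + 6 * x - 6) * exp x + 6
noncomputable def W (x : ℝ) : ℝ :=
  4 * exp (3 * x) - (2 * x ^ 2 + 4 * x + 4) * exp (2 * x) + (4 * x ^ 2 - 2 * x - 4) * exp x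
    + (6 * x + 4)

lemma hasDerivAt_d2V (x : ℝ) :
    HasDerivAt d2V ((288 * exp x - (8 * x ^ 2 + 80 * x + 180)) * exp x) x := by
  refine hasDerivAt_of_eq (((hasDerivAt_cubic_mul_exp 0 0 0 144 2 x).sub
    (hasDerivAt_cubic_mul_exp 0 8 64 116 1 x)).add_const 8) (fun y => ?_) ?_
  · simp only [d2V, Pi.sub_apply, one_mul]; ring
  · simp only [one_mul, exp_two_mul_eq_sq]; ring

lemma hasDerivAt_dV (x : ℝ) : HasDerivAt dV (d2V x) x := by
  refine hasDerivAt_of_eq (((hasDerivAt_cubic_mul_exp 0 0 0 72 2 x).sub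
    (hasDerivAt_cubic_mul_exp 0 8 48 68 1 x)).add (hasDerivAt_cubic_mul_exp 0 0 8 14 0 x))
    (fun y => ?_) ?_
  · simp only [dV, Pi.add_apply, Pi.sub_apply, one_mul, zero_mul, exp_zero]; ring
  · simp only [d2V, one_mul, zero_mul, exp_zero]; ring

lemma hasDerivAt_V (x : ℝ) : HasDerivAt V (dV x) x := by
  refine hasDerivAt_of_eq (((hasDerivAt_cubic_mul_exp 0 0 0 36 2 x).sub
    (hasDerivAt_cubic_mul_exp 0 8 32 36 1 x)).add (hasDerivAt_cubic_mul_exp 0 4 14 0 0 x))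
    (fun y => ?_) ?_
  · simp only [V, Pi.add_apply, Pi.sub_apply, one_mul, zero_mul, exp_zero]; ring
  · simp only [dV, one_mul, zero_mul, exp_zero]; ring

lemma hasDerivAt_dW (x : ℝ) : HasDerivAt dW (exp x * V x) x := by
  refine hasDerivAt_of_eq ((((hasDerivAt_cubic_mul_exp 0 0 0 12 3 x).sub
    (hasDerivAt_cubic_mul_exp 0 4 12 12 2 x)).add
    (hasDerivAt_cubic_mul_exp 0 4 6 (-6) 1 x)).add_const 6) (fun y => ?_) ?_
  · simp only [dW, Pi.add_apply, Pi.sub_apply, one_mul]; ring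
  · simp only [V, one_mul, exp_two_mul_eq_sq, exp_three_mul_eq_cube]; ring

lemma hasDerivAt_W (x : ℝ) : HasDerivAt W (dW x) x := by
  refine hasDerivAt_of_eq (((hasDerivAt_cubic_mul_exp 0 0 0 4 3 x).sub
    (hasDerivAt_cubic_mul_exp 0 2 4 4 2 x)).add
    ((hasDerivAt_cubic_mul_exp 0 4 (-2) (-4) 1 x).add (hasDerivAt_cubic_mul_exp 0 0 6 4 0 x)))
    (fun y => ?_) ?_
  · simp only [W, Pi.add_apply, Pi.sub_apply, one_mul, zero_mul, exp_zero]; ring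
  · simp only [dW, one_mul, zero_mul, exp_zero]; ring

lemma d2V_pos {x : ℝ} (hx : 0 < x) : 0 < d2V x := by
  have h0 : d2V 0 = 36 := by norm_num [d2V]
  have := lt_of_hasDerivAt_pos hasDerivAt_d2V (fun y hy => ?_) hx
  · linarith
  · nlinarith [quadratic_le_exp_of_nonneg hy.le, exp_pos y]

lemma V_pos {x : ℝ} (hx : 0 < x) : 0 < V x := by
  have hdV {y : ℝ} (hy : 0 < y) : 0 < dV y := by
    have h0 : dV 0 = 18 := by norm_num [dV]
    have := lt_of_hasDerivAt_pos hasDerivAt_dV (fun _ hz => d2V_pos hz) hy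
    linarith
  have h0 : V 0 = 0 := by norm_num [V]
  simpa [h0] using lt_of_hasDerivAt_pos hasDerivAt_V (fun _ hz => hdV hz) hx

lemma W_pos {x : ℝ} (hx : 0 < x) : 0 < W x := by
  have hdW {y : ℝ} (hy : 0 < y) : 0 < dW y := by
    have h0 : dW 0 = 0 := by norm_num [dW]
    simpa [h0] using
      lt_of_hasDerivAt_pos hasDerivAt_dW (fun z hz => mul_pos (exp_pos z) (V_pos hz)) hy
  have h0 : W 0 = 0 := by norm_num [W]
  simpa [h0] using lt_of_hasDerivAt_pos hasDerivAt_W (fun _ hz => hdW hz) hx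

noncomputable def p (x : ℝ) : ℝ := 6 * exp (2 * x) - (4 * x + 6) * exp x - 2 * x
noncomputable def P (x : ℝ) : ℝ :=
  2 * exp (3 * x) - (2 * x + 2) * exp (2 * x) + (2 * x - 2) * exp x + (2 - 2 * x ^ 2)
noncomputable def H (x : ℝ) : ℝ :=
  -2 * exp (3 * x) + (2 * x + 2) * exp (2 * x) - (2 * x - 2) * exp x - 2

lemma hasDerivAt_p (x : ℝ) : HasDerivAt p (12 * exp (2 * x) - (4 * x + 10) * exp x - 2) x := by
  refine hasDerivAt_of_eq (((hasDerivAt_cubic_mul_exp 0 0 0 6 2 x).sub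
    (hasDerivAt_cubic_mul_exp 0 0 4 6 1 x)).sub (hasDerivAt_cubic_mul_exp 0 0 2 0 0 x))
    (fun y => ?_) ?_
  · simp only [p, Pi.sub_apply, one_mul, zero_mul, exp_zero]; ring
  · simp only [one_mul, zero_mul, exp_zero]; ring

lemma hasDerivAt_P (x : ℝ) : HasDerivAt P (exp x * p x + 4 * x * (exp x - 1)) x := by
  refine hasDerivAt_of_eq ((((hasDerivAt_cubic_mul_exp 0 0 0 2 3 x).sub
    (hasDerivAt_cubic_mul_exp 0 0 2 2 2 x)).add (hasDerivAt_cubic_mul_exp 0 0 2 (-2) 1 x)).add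
    (hasDerivAt_cubic_mul_exp 0 (-2) 0 2 0 x)) (fun y => ?_) ?_
  · simp only [P, Pi.add_apply, Pi.sub_apply, one_mul, zero_mul, exp_zero]; ring
  · simp only [p, one_mul, zero_mul, exp_zero, exp_two_mul_eq_sq, exp_three_mul_eq_cube]; ring

lemma p_pos {x : ℝ} (hx : 0 < x) : 0 < p x := by
  have h0 : p 0 = 0 := by norm_num [p]
  refine h0 ▸ lt_of_hasDerivAt_pos hasDerivAt_p (fun y hy => ?_) hx
  rw [exp_two_mul_eq_sq]
  nlinarith [add_one_le_exp y, exp_pos y]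

lemma P_pos {x : ℝ} (hx : 0 < x) : 0 < P x := by
  have h0 : P 0 = 0 := by norm_num [P]
  refine h0 ▸ lt_of_hasDerivAt_pos hasDerivAt_P (fun y hy => ?_) hx
  have : 0 < exp y - 1 := by linarith [add_one_lt_exp hy.ne']
  have := p_pos hy
  positivity

lemma H_lt {x : ℝ} (hx : 0 < x) : H x < -2 * x ^ 2 := by
  have : H x = -P x - 2 * x ^ 2 := by simp only [H, P]; ring
  linarith [P_pos hx]

lemma neg_four_mul_exp_three_mul_le_H {x : ℝ} (hx : 0 ≤ x) : -4 * exp (3 * x) ≤ H x := by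
  have h1 := add_one_le_exp x
  simp only [H, exp_two_mul_eq_sq, exp_three_mul_eq_cube]
  nlinarith [exp_pos x, pow_pos (exp_pos x) 2]

lemma exp_mul_exp_two_mul_sub_le {x : ℝ} (hx₀ : 0 ≤ x) (hx₁ : x ≤ 1) :
    exp x * (exp (2 * x) - x - 1) ≤ 21 * x := by
  have hup : exp x ≤ 1 + 2 * x := by
    have := abs_exp_sub_one_le (x := x) (by rwa [abs_of_nonneg hx₀])
    rw [abs_of_nonneg hx₀] at this
    linarith [(abs_le.1 this).2]
  have hlow := add_one_le_exp x
  have hsq : exp (2 * x) - x - 1 ≤ 7 * x := by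
    rw [exp_two_mul_eq_sq]; nlinarith
  calc exp x * (exp (2 * x) - x - 1) ≤ (1 + 2 * x) * (7 * x) := by
        gcongr
        · rw [exp_two_mul_eq_sq]; nlinarith
    _ ≤ 21 * x := by nlinarith

noncomputable def G (β d : ℝ) : ℝ :=
  (d ^ 2 - 2) * exp (3 * β * d) + 2 * (β * d + 1) * exp (2 * β * d)
    - (β * d ^ 3 + d ^ 2 + 2 * β * d - 2) * exp (β * d) - 2

lemma G_eq (β d : ℝ) :
    G β d = exp (β * d) * (exp (2 * (β * d)) - β * d - 1) * d ^ 2 + H (β * d) := by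
  simp only [G, H, mul_assoc, exp_two_mul_eq_sq, exp_three_mul_eq_cube]
  ring

lemma G_neg {β d : ℝ} (hd : 0 < d) (hβd : β * d ≤ 1) (hdβ : 21 * d ≤ 2 * β) : G β d < 0 := by
  have hx : 0 < β * d := by nlinarith
  have hsmall := exp_mul_exp_two_mul_sub_le hx.le hβd
  rw [G_eq]
  nlinarith [H_lt hx, mul_le_mul_of_nonneg_right hsmall (sq_nonneg d)]

lemma G_pos {β d : ℝ} (hd : 3 ≤ d) (hβd : 2 ≤ β * d) : 0 < G β d := by
  set x := β * d
  have ht : 2 * x ≤ exp x := by nlinarith [quadratic_le_exp_of_nonneg (x := x) (by linarith)]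
  have hhalf : exp x ^ 2 / 2 ≤ exp (2 * x) - x - 1 := by rw [exp_two_mul_eq_sq]; nlinarith
  have hH := neg_four_mul_exp_three_mul_le_H (x := x) (by linarith)
  rw [exp_three_mul_eq_cube] at hH
  have h9 : (9 : ℝ) ≤ d ^ 2 := by nlinarith
  calc 0 < exp x * (exp x ^ 2 / 2) * 9 + -4 * exp x ^ 3 := by nlinarith [pow_pos (exp_pos x) 3]
    _ ≤ exp x * (exp (2 * x) - x - 1) * d ^ 2 + H x := by
        refine add_le_add ?_ hH
        gcongr
        exact mul_nonneg (exp_pos x).le ((by positivity : (0 : ℝ) ≤ exp x ^ 2 / 2).trans hhalf)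
    _ = G β d := (G_eq β d).symm

noncomputable def dG (β d : ℝ) : ℝ :=
  (3 * β * d ^ 2 + 2 * d - 6 * β) * exp (3 * β * d) + (4 * β ^ 2 * d + 6 * β) * exp (2 * β * d)
    - (β ^ 2 * d ^ 3 + 4 * β * d ^ 2 + 2 * β ^ 2 * d + 2 * d) * exp (β * d)

lemma hasDerivAt_G (β d : ℝ) : HasDerivAt (G β) (dG β d) d := by
  refine hasDerivAt_of_eq ((((hasDerivAt_cubic_mul_exp 0 1 0 (-2) (3 * β) d).add
    (hasDerivAt_cubic_mul_exp 0 0 (2 * β) 2 (2 * β) d)).sub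
    (hasDerivAt_cubic_mul_exp β 1 (2 * β) (-2) β d)).sub_const 2) (fun y => ?_) ?_
  · simp only [G, Pi.add_apply, Pi.sub_apply]; ring
  · simp only [dG]; ring

noncomputable def Gscaled (β d : ℝ) : ℝ := G β d / (d ^ 2 * exp (3 * β * d))

lemma G_eq_mul_Gscaled (β : ℝ) {d : ℝ} (hd : d ≠ 0) :
    G β d = d ^ 2 * exp (3 * β * d) * Gscaled β d := by
  rw [Gscaled, mul_div_cancel₀ _ (by positivity)]

lemma deriv_Gscaled_num_eq (β d : ℝ) :
    dG β d * (d ^ 2 * exp (3 * β * d)) - G β d * (2 * d * exp (3 * β * d)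
      + d ^ 2 * (3 * β * exp (3 * β * d)))
    = exp (3 * β * d) * d * (W (β * d) + (2 * (β * d) ^ 2 + β * d) * d ^ 2 * exp (β * d)) := by
  simp only [dG, G, W, mul_assoc, exp_two_mul_eq_sq, exp_three_mul_eq_cube]
  ring

lemma strictMonoOn_Gscaled {β : ℝ} (hβ : 0 < β) : StrictMonoOn (Gscaled β) (Set.Ioi 0) := by
  have hderiv : ∀ d > (0 : ℝ), HasDerivAt (Gscaled β)
      ((dG β d * (d ^ 2 * exp (3 * β * d)) - G β d * (2 * d * exp (3 * β * d)
        + d ^ 2 * (3 * β * exp (3 * β * d)))) / (d ^ 2 * exp (3 * β * d)) ^ 2) d := by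
    intro d (hd : 0 < d)
    have hden := (hasDerivAt_pow 2 d).mul ((hasDerivAt_id' d).const_mul (3 * β)).exp
    refine hasDerivAt_of_eq ((hasDerivAt_G β d).div hden (mul_pos (pow_pos hd 2) (exp_pos _)).ne')
      (fun _ => rfl) ?_
    simp only [Pi.mul_apply]; push_cast; ring
  refine strictMonoOn_Ioi_of_hasDerivAt_pos hderiv fun d (hd : 0 < d) => ?_
  have hx : 0 < β * d := mul_pos hβ hd
  have := W_pos hx
  rw [deriv_Gscaled_num_eq]
  positivity

lemma exists_sign_change_G {β : ℝ} (hβ : 0 < β) :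
    ∃ d₀ > 0, (∀ d ∈ Set.Ioo 0 d₀, G β d < 0) ∧ G β d₀ = 0 ∧ ∀ d > d₀, 0 < G β d := by
  set d₁ := min (1 / β) (β / 11)
  have hd₁ : 0 < d₁ := lt_min (by positivity) (by positivity)
  have hd₁β : d₁ ≤ 1 / β := min_le_left _ _
  have hd₁₂ : d₁ < 3 + 2 / β := by
    have : 0 < 1 / β := by positivity
    linarith [show 2 / β = 2 * (1 / β) by ring]
  have hG₁ : G β d₁ < 0 := by
    refine G_neg hd₁ ?_ ?_
    · calc β * d₁ ≤ β * (1 / β) := by gcongr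
        _ = 1 := by field_simp
    · linarith [min_le_right (1 / β) (β / 11)]
  have hG₂ : 0 < G β (3 + 2 / β) := by
    refine G_pos (by linarith [show 0 < 2 / β by positivity]) ?_
    rw [mul_add, mul_div_cancel₀ _ hβ.ne']
    linarith
  obtain ⟨d₀, hd₀, hG₀⟩ := intermediate_value_Ioo hd₁₂.le
    (fun d _ => (hasDerivAt_G β d).continuousAt.continuousWithinAt) ⟨hG₁, hG₂⟩
  have hd₀pos : 0 < d₀ := hd₁.trans hd₀.1
  have hscaled₀ : Gscaled β d₀ = 0 := by simp [Gscaled, hG₀]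
  have hmono := strictMonoOn_Gscaled hβ
  refine ⟨d₀, hd₀pos, fun d hd => ?_, hG₀, fun d hd => ?_⟩
  · have hd' : 0 < d := hd.1
    rw [G_eq_mul_Gscaled β hd'.ne']
    exact mul_neg_of_pos_of_neg (by positivity) (hscaled₀ ▸ hmono hd' hd₀pos hd.2)
  · have hd' : 0 < d := hd₀pos.trans hd
    rw [G_eq_mul_Gscaled β hd'.ne']
    exact mul_pos (by positivity) (hscaled₀ ▸ hmono hd₀pos hd' hd)

lemma Rtwo_num_pos {β d : ℝ} (hβ : 0 < β) (hd : 0 < d) : 0 < (d ^ 2 + 2) * exp (β * d) - 2 := by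
  nlinarith [add_one_le_exp (β * d), mul_pos hβ hd, exp_pos (β * d)]

lemma Rtwo_den_pos {β d : ℝ} (hβ : 0 < β) (hd : 0 < d) : 0 < d ^ 2 * (exp (2 * β * d) - 1) := by
  have : 1 < exp (2 * β * d) := one_lt_exp_iff.2 (by positivity)
  have : 0 < exp (2 * β * d) - 1 := by linarith
  positivity

lemma Rtwo_deriv_num_eq (β d : ℝ) :
    2 * ((d ^ 2 + 2) * exp (β * d) - 2) * ((2 * d + β * (d ^ 2 + 2)) * exp (β * d))
        * (d ^ 2 * (exp (2 * β * d) - 1))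
      - ((d ^ 2 + 2) * exp (β * d) - 2) ^ 2
        * (2 * d * (exp (2 * β * d) - 1) + d ^ 2 * (2 * β * exp (2 * β * d)))
    = 2 * d * ((d ^ 2 + 2) * exp (β * d) - 2) * G β d := by
  simp only [G, mul_assoc, exp_two_mul_eq_sq, exp_three_mul_eq_cube]
  ring

lemma hasDerivAt_Rtwo {β d : ℝ} (hβ : 0 < β) (hd : 0 < d) :
    HasDerivAt (Rtwo β) (2 * d * ((d ^ 2 + 2) * exp (β * d) - 2)
      / (d ^ 2 * (exp (2 * β * d) - 1)) ^ 2 * G β d) d := by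
  have hnum : HasDerivAt (fun y => ((y ^ 2 + 2) * exp (β * y) - 2) ^ 2)
      (2 * ((d ^ 2 + 2) * exp (β * d) - 2) * ((2 * d + β * (d ^ 2 + 2)) * exp (β * d))) d := by
    refine hasDerivAt_of_eq (((hasDerivAt_cubic_mul_exp 0 1 0 2 β d).sub_const 2).pow 2)
      (fun y => ?_) ?_
    · simp only [Pi.pow_apply]; ring
    · push_cast; ring
  have hden : HasDerivAt (fun y => y ^ 2 * (exp (2 * β * y) - 1))
      (2 * d * (exp (2 * β * d) - 1) + d ^ 2 * (2 * β * exp (2 * β * d))) d := by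
    refine hasDerivAt_of_eq ((hasDerivAt_pow 2 d).mul
      (((hasDerivAt_id' d).const_mul (2 * β)).exp.sub_const 1)) (fun y => rfl) ?_
    push_cast; ring
  refine hasDerivAt_of_eq (hnum.div hden (Rtwo_den_pos hβ hd).ne') (fun y => rfl) ?_
  rw [Rtwo_deriv_num_eq]
  ring

end KOptimal

open KOptimal in
/-- There is a unique K-optimal two-point design `{0, d_opt}`: `Rtwo` has a
unique global minimum point `d_opt > 0`, which is the unique positive solution
of `(d²−2)e^{3βd} + 2(βd+1)e^{2βd} − (βd³+d²+2βd−2)e^{βd} − 2 = 0`. -/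
theorem twoPoint_K_optimal (β : ℝ) (hβ : 0 < β) :
    ∃ dopt : ℝ, 0 < dopt ∧
      (∀ d > (0 : ℝ), d ≠ dopt → Rtwo β dopt < Rtwo β d) ∧
      ((dopt ^ 2 - 2) * exp (3 * β * dopt) + 2 * (β * dopt + 1) * exp (2 * β * dopt)
        - (β * dopt ^ 3 + dopt ^ 2 + 2 * β * dopt - 2) * exp (β * dopt) - 2 = 0) ∧
      (∀ d > (0 : ℝ),
        (d ^ 2 - 2) * exp (3 * β * d) + 2 * (β * d + 1) * exp (2 * β * d)
          - (β * d ^ 3 + d ^ 2 + 2 * β * d - 2) * exp (β * d) - 2 = 0 → d = dopt) := by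
  obtain ⟨d₀, hd₀, hneg, hG₀, hpos⟩ := exists_sign_change_G hβ
  have hfactor {d : ℝ} (hd : 0 < d) : 0 < 2 * d * ((d ^ 2 + 2) * exp (β * d) - 2)
      / (d ^ 2 * (exp (2 * β * d) - 1)) ^ 2 := by
    have := Rtwo_num_pos hβ hd
    have := Rtwo_den_pos hβ hd
    positivity
  refine ⟨d₀, hd₀, fun d hd hne => ?_, hG₀, fun d hd hG => ?_⟩
  · exact lt_of_hasDerivAt_neg_of_pos hd₀ (fun x hx => hasDerivAt_Rtwo hβ hx)
      (fun x hx => mul_neg_of_pos_of_neg (hfactor hx.1) (hneg x hx))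
      (fun x hx => mul_pos (hfactor (hd₀.trans hx)) (hpos x hx)) hd hne
  · by_contra hne
    rcases lt_or_gt_of_ne hne with hlt | hgt
    · exact (hneg d ⟨hd, hlt⟩).ne hG
    · exact (hpos d hgt).ne' hG
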